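/- Let ⟪-,-⟫₁ and ⟪-,-⟫₂ be double brackets on A associated with the inner and outer bimodule structures respectively, and assume ⟪-,-⟫₁ = ° ∘ ⟪-,-⟫₂. If one of them is a double Poisson bracket, then the operations {a,b}_{j,m} := ⟪a,b⟫_j'⟪a,b⟫_j'' (j = 1,2) are Loday brackets on A (a right Loday bracket for j = 1, a left Loday bracket for j = 2), they satisfy {a,b}_{1,m} = -{b,a}_{2,m} for all a,b ∈ A, and they induce the same Lie bracket on A/[A,A]. -/
import Mathlib


open scoped TensorProduct

noncomputable section

/-- A (`k`-linear) `A`-bimodule-type structure on a `k`-module `M`,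
given by a three-slot action `a · d · b`. -/
structure BimodOn (k A M : Type*) [CommSemiring k] [Ring A] [Algebra k A]
    [AddCommMonoid M] [Module k M] where
  act : A → M → A → M
  add_left : ∀ (a a' : A) (d : M) (b : A), act (a + a') d b = act a d b + act a' d b
  add_mid : ∀ (a : A) (d d' : M) (b : A), act a (d + d') b = act a d b + act a d' b
  add_right : ∀ (a : A) (d : M) (b b' : A), act a d (b + b') = act a d b + act a d b'
  smul_left : ∀ (c : k) (a : A) (d : M) (b : A), act (c • a) d b = c • act a d b
  smul_mid : ∀ (c : k) (a : A) (d : M) (b : A), act a (c • d) b = c • act a d b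
  smul_right : ∀ (c : k) (a : A) (d : M) (b : A), act a d (c • b) = c • act a d b
  act_one_one : ∀ d : M, act 1 d 1 = d
  act_mul : ∀ (a a' : A) (d : M) (b b' : A), act a (act a' d b') b = act (a * a') d (b' * b)

/-- An `A`-bimodule structure on `A ⊗[k] A`. -/
abbrev BimodStr (k A : Type*) [CommSemiring k] [Ring A] [Algebra k A] :=
  BimodOn k A (A ⊗[k] A)

section Defs

variable (k A : Type*) [CommSemiring k] [Ring A] [Algebra k A]

/-- The swap automorphism `°` of `A ⊗[k] A`, `a ⊗ b ↦ b ⊗ a`. -/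
def swapT : A ⊗[k] A →ₗ[k] A ⊗[k] A := (TensorProduct.comm k A A).toLinearMap

variable {k A}

namespace BimodOn

/-- The swap bimodule structure `a * d * b = (a · d° · b)°` associated with a
bimodule structure on `A ⊗[k] A`. -/
def star (S : BimodStr k A) (a : A) (d : A ⊗[k] A) (b : A) : A ⊗[k] A :=
  swapT k A (S.act a (swapT k A d) b)

/-- A bimodule structure on `A ⊗[k] A` is swap-commuting if it commutes with its
swap bimodule structure. -/
def SwapCommuting (S : BimodStr k A) : Prop :=
  ∀ (a₁ a₂ b₁ b₂ : A) (d : A ⊗[k] A),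
    S.act a₁ (S.star a₂ d b₂) b₁ = S.star a₂ (S.act a₁ d b₁) b₂

end BimodOn

end Defs

/-- A double bracket on `A` associated with a bimodule structure `S` on `A ⊗[k] A`
(with swap bimodule structure `S.star`). -/
structure DoubleBracket {k A : Type*} [CommSemiring k] [Ring A] [Algebra k A]
    (S : BimodStr k A) where
  br : A →ₗ[k] A →ₗ[k] A ⊗[k] A
  antisymm : ∀ a b : A, br a b = - swapT k A (br b a)
  leibniz_right : ∀ a b c : A, br a (b * c) = S.act b (br a c) 1 + S.act 1 (br a b) c
  leibniz_left : ∀ a b c : A, br (b * c) a = S.star b (br c a) 1 + S.star 1 (br b a) c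

section Taus

variable (k A : Type*) [CommSemiring k] [Ring A] [Algebra k A]

/-- `τ_{(123)}` on `A^{⊗3}`: `a ⊗ b ⊗ c ↦ c ⊗ a ⊗ b`. -/
def tau123 : (A ⊗[k] A) ⊗[k] A →ₗ[k] (A ⊗[k] A) ⊗[k] A :=
  ((TensorProduct.comm k (A ⊗[k] A) A).trans (TensorProduct.assoc k A A A).symm).toLinearMap

/-- `τ_{(132)}` on `A^{⊗3}`: `a ⊗ b ⊗ c ↦ b ⊗ c ⊗ a`. -/
def tau132 : (A ⊗[k] A) ⊗[k] A →ₗ[k] (A ⊗[k] A) ⊗[k] A :=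
  ((TensorProduct.assoc k A A A).trans (TensorProduct.comm k A (A ⊗[k] A))).toLinearMap

/-- `τ_{(12)}` on `A^{⊗3}`: `a ⊗ b ⊗ c ↦ b ⊗ a ⊗ c`. -/
def tau12 : (A ⊗[k] A) ⊗[k] A →ₗ[k] (A ⊗[k] A) ⊗[k] A :=
  (TensorProduct.congr (TensorProduct.comm k A A) (LinearEquiv.refl k A)).toLinearMap

variable {k A}

/-- `⟪a, -⟫_L : A ⊗ A → A ⊗ A ⊗ A`, `b₁ ⊗ b₂ ↦ ⟪a, b₁⟫ ⊗ b₂`. -/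
def trL (br : A →ₗ[k] A →ₗ[k] A ⊗[k] A) (a : A) :
    A ⊗[k] A →ₗ[k] (A ⊗[k] A) ⊗[k] A :=
  TensorProduct.map (br a) LinearMap.id

/-- The double Jacobiator of a bilinear operation `A × A → A ⊗ A`:
`⟪a,b,c⟫ = ⟪a,⟪b,c⟫⟫_L + τ_{(123)} ⟪b,⟪c,a⟫⟫_L + τ_{(132)} ⟪c,⟪a,b⟫⟫_L`. -/
def jac (br : A →ₗ[k] A →ₗ[k] A ⊗[k] A) (a b c : A) : (A ⊗[k] A) ⊗[k] A :=
  trL br a (br b c) + tau123 k A (trL br b (br c a)) + tau132 k A (trL br c (br a b))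

end Taus

end

/-- The `k`-span of commutators `[A,A]` in `A`. -/
def commSpan (k A : Type*) [CommSemiring k] [Ring A] [Algebra k A] : Submodule k A :=
  Submodule.span k {x : A | ∃ a b : A, x = a * b - b * a}

/-- The multiplication map `m ∘ ⟪-,-⟫ : A × A → A`, `{a,b}_m = ⟪a,b⟫'⟪a,b⟫''`. -/
noncomputable def brm {k A : Type*} [CommSemiring k] [Ring A] [Algebra k A]
    (br : A →ₗ[k] A →ₗ[k] A ⊗[k] A) (a b : A) : A :=
  LinearMap.mul' k A (br a b)

section Helpers

variable {k A : Type*} [CommSemiring k] [Ring A] [Algebra k A]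

/-- Multiplication of the three tensor factors. -/
noncomputable def mul3 (k A : Type*) [CommSemiring k] [Ring A] [Algebra k A] :
    (A ⊗[k] A) ⊗[k] A →ₗ[k] A :=
  (LinearMap.mul' k A).comp (TensorProduct.map (LinearMap.mul' k A) LinearMap.id)

lemma mul3_tmul (s t u : A) : mul3 k A ((s ⊗ₜ[k] t) ⊗ₜ[k] u) = s * t * u := by
  simp [mul3]

lemma swapT_tmul (s t : A) : swapT k A (s ⊗ₜ[k] t) = t ⊗ₜ[k] s := rfl

lemma swapT_swapT (d : A ⊗[k] A) : swapT k A (swapT k A d) = d := by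
  induction d using TensorProduct.induction_on with
  | zero => simp
  | tmul s t => rfl
  | add x y hx hy => simp [map_add, hx, hy]

lemma tau123_tmul (s t u : A) :
    tau123 k A ((s ⊗ₜ[k] t) ⊗ₜ[k] u) = (u ⊗ₜ[k] s) ⊗ₜ[k] t := rfl

lemma tau132_tmul (s t u : A) :
    tau132 k A ((s ⊗ₜ[k] t) ⊗ₜ[k] u) = (t ⊗ₜ[k] u) ⊗ₜ[k] s := rfl

lemma tau12_tmul' (e : A ⊗[k] A) (u : A) :
    tau12 k A (e ⊗ₜ[k] u) = (swapT k A e) ⊗ₜ[k] u := by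
  simp [tau12, swapT]

lemma mul2_lmul (u : A) (e : A ⊗[k] A) :
    LinearMap.mul' k A ((u ⊗ₜ[k] (1 : A)) * e) = u * LinearMap.mul' k A e := by
  induction e using TensorProduct.induction_on with
  | zero => simp
  | tmul s t => simp [Algebra.TensorProduct.tmul_mul_tmul, mul_assoc]
  | add x y hx hy => simp [mul_add, map_add, hx, hy]

lemma mul2_rmul (v : A) (e : A ⊗[k] A) :
    LinearMap.mul' k A (e * ((1 : A) ⊗ₜ[k] v)) = LinearMap.mul' k A e * v := by
  induction e using TensorProduct.induction_on with
  | zero => simp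
  | tmul s t => simp [Algebra.TensorProduct.tmul_mul_tmul, mul_assoc]
  | add x y hx hy => simp [add_mul, map_add, hx, hy]

lemma mul2_mid (q : A) (e : A ⊗[k] A) :
    LinearMap.mul' k A (e * (q ⊗ₜ[k] (1 : A)))
      = LinearMap.mul' k A (((1 : A) ⊗ₜ[k] q) * e) := by
  induction e using TensorProduct.induction_on with
  | zero => simp
  | tmul s t => simp [Algebra.TensorProduct.tmul_mul_tmul, mul_assoc]
  | add x y hx hy => simp [add_mul, mul_add, map_add, hx, hy]

lemma mul3_H1 (e : A ⊗[k] A) (u : A) :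
    mul3 k A (e ⊗ₜ[k] u) = LinearMap.mul' k A e * u := by
  induction e using TensorProduct.induction_on with
  | zero => simp
  | tmul s t => simp [mul3]
  | add x y hx hy => simp [TensorProduct.add_tmul, map_add, add_mul, hx, hy]

lemma mul3_H2 (e : A ⊗[k] A) (u : A) :
    mul3 k A (tau123 k A (e ⊗ₜ[k] u)) = u * LinearMap.mul' k A e := by
  induction e using TensorProduct.induction_on with
  | zero => simp
  | tmul s t => rw [tau123_tmul, mul3_tmul]; simp [mul_assoc]
  | add x y hx hy => simp [TensorProduct.add_tmul, map_add, mul_add, hx, hy]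

lemma mul3_H3 (e : A ⊗[k] A) (p : A) :
    mul3 k A (tau132 k A ((swapT k A e) ⊗ₜ[k] p))
      = LinearMap.mul' k A (((1 : A) ⊗ₜ[k] p) * e) := by
  induction e using TensorProduct.induction_on with
  | zero => simp
  | tmul s t =>
      rw [swapT_tmul, tau132_tmul, mul3_tmul]
      simp [Algebra.TensorProduct.tmul_mul_tmul, mul_assoc]
  | add x y hx hy => simp [TensorProduct.add_tmul, map_add, mul_add, hx, hy]

lemma comm_mem (d : A ⊗[k] A) :
    LinearMap.mul' k A d - LinearMap.mul' k A (swapT k A d) ∈ commSpan k A := by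
  induction d using TensorProduct.induction_on with
  | zero => simp [Submodule.zero_mem]
  | tmul s t =>
      exact Submodule.subset_span ⟨s, t, by simp [swapT_tmul]⟩
  | add x y hx hy =>
      have h := add_mem hx hy
      have e : LinearMap.mul' k A (x + y) - LinearMap.mul' k A (swapT k A (x + y))
          = (LinearMap.mul' k A x - LinearMap.mul' k A (swapT k A x))
            + (LinearMap.mul' k A y - LinearMap.mul' k A (swapT k A y)) := by
        simp [map_add]; abel
      rw [e]; exact h

lemma comm_mem3 (z : (A ⊗[k] A) ⊗[k] A) :
    mul3 k A z - mul3 k A (tau123 k A z) ∈ commSpan k A := by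
  induction z using TensorProduct.induction_on with
  | zero => simp [Submodule.zero_mem]
  | tmul e u =>
      rw [mul3_H1, mul3_H2]
      exact Submodule.subset_span ⟨LinearMap.mul' k A e, u, rfl⟩
  | add x y hx hy =>
      have h := add_mem hx hy
      have e : mul3 k A (x + y) - mul3 k A (tau123 k A (x + y))
          = (mul3 k A x - mul3 k A (tau123 k A x))
            + (mul3 k A y - mul3 k A (tau123 k A y)) := by
        simp [map_add]; abel
      rw [e]; exact h

lemma tau_C1 (z : (A ⊗[k] A) ⊗[k] A) :
    tau12 k A (tau123 k A z) = tau132 k A (tau12 k A z) := by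
  have h : (tau12 k A).comp (tau123 k A) = (tau132 k A).comp (tau12 k A) :=
    TensorProduct.ext_threefold fun x y u => rfl
  exact DFunLike.congr_fun h z

lemma tau_C2 (z : (A ⊗[k] A) ⊗[k] A) :
    tau12 k A (tau123 k A (tau123 k A z)) = tau123 k A (tau12 k A z) := by
  have h : ((tau12 k A).comp (tau123 k A)).comp (tau123 k A)
      = (tau123 k A).comp (tau12 k A) :=
    TensorProduct.ext_threefold fun x y u => rfl
  exact DFunLike.congr_fun h z

lemma tau_C3 (z : (A ⊗[k] A) ⊗[k] A) :
    tau12 k A (tau123 k A (tau132 k A z)) = tau12 k A z := by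
  have h : ((tau12 k A).comp (tau123 k A)).comp (tau132 k A) = tau12 k A :=
    TensorProduct.ext_threefold fun x y u => rfl
  exact DFunLike.congr_fun h z

end Helpers

set_option maxHeartbeats 2000000 in
private theorem inner_outer_loday_brackets_aux
    {k A : Type*} [Field k] [CharZero k] [Ring A] [Algebra k A]
    (Sin : BimodStr k A)
    (hin : ∀ (a b : A) (d : A ⊗[k] A),
      Sin.act a d b = ((1 : A) ⊗ₜ[k] a) * d * (b ⊗ₜ[k] (1 : A)))
    (Sout : BimodStr k A)
    (hout : ∀ (a b : A) (d : A ⊗[k] A),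
      Sout.act a d b = (a ⊗ₜ[k] (1 : A)) * d * ((1 : A) ⊗ₜ[k] b))
    (D₁ : DoubleBracket Sin) (D₂ : DoubleBracket Sout)
    (hbr : ∀ a b : A, D₁.br a b = swapT k A (D₂.br a b))
    (hP : (∀ a b c : A, jac D₁.br a b c = 0) ∨ (∀ a b c : A, jac D₂.br a b c = 0)) :
    (∀ a b c : A, brm D₁.br (brm D₁.br a b) c
      = brm D₁.br a (brm D₁.br b c) + brm D₁.br (brm D₁.br a c) b) ∧
    (∀ a b c : A, brm D₂.br a (brm D₂.br b c)
      = brm D₂.br (brm D₂.br a b) c + brm D₂.br b (brm D₂.br a c)) ∧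
    (∀ a b : A, brm D₁.br a b = - brm D₂.br b a) ∧
    (∃ L : (A ⧸ commSpan k A) →ₗ[k] (A ⧸ commSpan k A) →ₗ[k] (A ⧸ commSpan k A),
      (∀ a b : A, L (Submodule.Quotient.mk a) (Submodule.Quotient.mk b)
        = Submodule.Quotient.mk (brm D₁.br a b)) ∧
      (∀ a b : A, L (Submodule.Quotient.mk a) (Submodule.Quotient.mk b)
        = Submodule.Quotient.mk (brm D₂.br a b)) ∧
      (∀ x y, L x y = - L y x) ∧
      (∀ x y z, L x (L y z) = L (L x y) z + L y (L x z))) := by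
  
  classical
  have hBs : ∀ x y : A, D₂.br x y = - swapT k A (D₂.br y x) := D₂.antisymm
  have hD : ∀ a b : A, D₁.br a b = - D₂.br b a := by
    intro a b
    rw [hbr a b, hBs b a, neg_neg]
  have S3 : ∀ a b : A, brm D₁.br a b = - brm D₂.br b a := by
    intro a b
    simp only [brm]
    rw [hD a b, map_neg]
  have hstar : ∀ (a b : A) (d : A ⊗[k] A),
      Sout.star a d b = ((1 : A) ⊗ₜ[k] a) * d * (b ⊗ₜ[k] (1 : A)) := by
    intro a b d
    rw [BimodOn.star, hout]
    induction d using TensorProduct.induction_on with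
    | zero => simp
    | tmul s t => simp [swapT_tmul, Algebra.TensorProduct.tmul_mul_tmul]
    | add x y hx hy => simp only [map_add, mul_add, add_mul, hx, hy]
  have E1 : ∀ (a : A) (d : A ⊗[k] A),
      LinearMap.mul' k A (D₂.br a (LinearMap.mul' k A d))
        = mul3 k A (trL D₂.br a d)
          + mul3 k A (tau123 k A (trL D₂.br a (swapT k A d))) := by
    intro a d
    induction d using TensorProduct.induction_on with
    | zero => simp
    | tmul u v =>
        rw [LinearMap.mul'_apply, D₂.leibniz_right a u v, map_add, hout u 1, hout 1 v]
        have h1 : (u ⊗ₜ[k] (1:A)) * (D₂.br a v) * ((1:A) ⊗ₜ[k] (1:A))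
            = (u ⊗ₜ[k] (1:A)) * (D₂.br a v) := by
          rw [← Algebra.TensorProduct.one_def, mul_one]
        have h2 : ((1:A) ⊗ₜ[k] (1:A)) * (D₂.br a u) * ((1:A) ⊗ₜ[k] v)
            = (D₂.br a u) * ((1:A) ⊗ₜ[k] v) := by
          rw [← Algebra.TensorProduct.one_def, one_mul]
        rw [h1, h2, mul2_lmul, mul2_rmul, swapT_tmul]
        have t1 : trL D₂.br a (u ⊗ₜ[k] v) = (D₂.br a u) ⊗ₜ[k] v := by
          simp [trL]
        have t2 : trL D₂.br a (v ⊗ₜ[k] u) = (D₂.br a v) ⊗ₜ[k] u := by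
          simp [trL]
        rw [t1, t2, mul3_H1, mul3_H2]
        exact add_comm _ _
    | add x y hx hy =>
        simp only [map_add, LinearMap.add_apply, hx, hy]
        abel
  have E2 : ∀ (c : A) (d : A ⊗[k] A),
      LinearMap.mul' k A (D₂.br (LinearMap.mul' k A d) c)
        = -(mul3 k A (tau132 k A (trL D₂.br c (swapT k A d)))
            + mul3 k A (tau132 k A (trL D₂.br c d))) := by
    intro c d
    induction d using TensorProduct.induction_on with
    | zero => simp
    | tmul p q =>
        rw [LinearMap.mul'_apply, D₂.leibniz_left c p q, map_add, hstar p 1, hstar 1 q]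
        have h1 : ((1:A) ⊗ₜ[k] p) * (D₂.br q c) * ((1:A) ⊗ₜ[k] (1:A))
            = ((1:A) ⊗ₜ[k] p) * (D₂.br q c) := by
          rw [← Algebra.TensorProduct.one_def, mul_one]
        have h2 : ((1:A) ⊗ₜ[k] (1:A)) * (D₂.br p c) * (q ⊗ₜ[k] (1:A))
            = (D₂.br p c) * (q ⊗ₜ[k] (1:A)) := by
          rw [← Algebra.TensorProduct.one_def, one_mul]
        rw [h1, h2, mul2_mid, swapT_tmul]
        have t1 : trL D₂.br c (q ⊗ₜ[k] p) = (D₂.br c q) ⊗ₜ[k] p := by simp [trL]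
        have t2 : trL D₂.br c (p ⊗ₜ[k] q) = (D₂.br c p) ⊗ₜ[k] q := by simp [trL]
        rw [t1, t2, hBs c q, hBs c p]
        simp only [TensorProduct.neg_tmul, map_neg]
        rw [mul3_H3, mul3_H3]
        abel
    | add x y hx hy =>
        simp only [map_add, LinearMap.add_apply, hx, hy]
        abel
  have TL1 : ∀ (a : A) (d : A ⊗[k] A),
      trL D₁.br a d = tau12 k A (trL D₂.br a d) := by
    intro a d
    induction d using TensorProduct.induction_on with
    | zero => simp
    | tmul u v =>
        have t1 : trL D₁.br a (u ⊗ₜ[k] v) = (D₁.br a u) ⊗ₜ[k] v := by simp [trL]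
        have t2 : trL D₂.br a (u ⊗ₜ[k] v) = (D₂.br a u) ⊗ₜ[k] v := by simp [trL]
        rw [t1, t2, tau12_tmul', hD a u, hBs u a, neg_neg]
    | add x y hx hy => simp only [map_add, hx, hy]
  have Ej : ∀ a b c : A,
      jac D₁.br a b c = - tau12 k A (tau123 k A (jac D₂.br c b a)) := by
    intro a b c
    simp only [jac]
    rw [hD b c, hD c a, hD a b]
    simp only [map_neg, TL1, map_add, neg_add]
    rw [tau_C3, tau_C2, tau_C1]
    abel
  have hJ2 : ∀ a b c : A, jac D₂.br a b c = 0 := by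
    rcases hP with h | h
    · intro a b c
      have inj12 : Function.Injective (tau12 k A) :=
        (TensorProduct.congr (TensorProduct.comm k A A) (LinearEquiv.refl k A)).injective
      have inj123 : Function.Injective (tau123 k A) :=
        ((TensorProduct.comm k (A ⊗[k] A) A).trans
          (TensorProduct.assoc k A A A).symm).injective
      have h0 := h c b a
      rw [Ej c b a] at h0
      have h1 : tau12 k A (tau123 k A (jac D₂.br a b c)) = 0 := neg_eq_zero.mp h0
      have h2 : tau123 k A (jac D₂.br a b c) = 0 :=
        inj12 (h1.trans (map_zero (tau12 k A)).symm)
      exact inj123 (h2.trans (map_zero (tau123 k A)).symm)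
    · exact h
  have LOD2 : ∀ a b c : A, brm D₂.br a (brm D₂.br b c)
      = brm D₂.br (brm D₂.br a b) c + brm D₂.br b (brm D₂.br a c) := by
    intro a b c
    have j1 : mul3 k A (trL D₂.br a (D₂.br b c))
        - mul3 k A (tau123 k A (trL D₂.br b (swapT k A (D₂.br a c))))
        + mul3 k A (tau132 k A (trL D₂.br c (D₂.br a b))) = 0 := by
      have h := hJ2 a b c
      rw [jac, hBs c a] at h
      simp only [map_neg] at h
      have h2 := congrArg (mul3 k A) h
      simp only [map_add, map_neg, map_zero] at h2
      rw [sub_eq_add_neg]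
      exact h2
    have j2 : mul3 k A (trL D₂.br b (D₂.br a c))
        - mul3 k A (tau123 k A (trL D₂.br a (swapT k A (D₂.br b c))))
        - mul3 k A (tau132 k A (trL D₂.br c (swapT k A (D₂.br a b)))) = 0 := by
      have h := hJ2 b a c
      rw [jac, hBs c b, hBs b a] at h
      simp only [map_neg] at h
      have h2 := congrArg (mul3 k A) h
      simp only [map_add, map_neg, map_zero] at h2
      rw [sub_eq_add_neg, sub_eq_add_neg]
      exact h2
    simp only [brm]
    rw [E1 a (D₂.br b c), E1 b (D₂.br a c), E2 c (D₂.br a b)]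
    have h12 := congrArg₂ (· - ·) j1 j2
    simp only [sub_zero] at h12
    rw [← sub_eq_zero, ← h12]
    abel
  have LOD1 : ∀ a b c : A, brm D₁.br (brm D₁.br a b) c
      = brm D₁.br a (brm D₁.br b c) + brm D₁.br (brm D₁.br a c) b := by
    intro a b c
    have brm_neg1 : ∀ x y : A, brm D₂.br (-x) y = - brm D₂.br x y := by
      intro x y; simp [brm, map_neg, LinearMap.neg_apply]
    have brm_neg2 : ∀ x y : A, brm D₂.br x (-y) = - brm D₂.br x y := by
      intro x y; simp [brm, map_neg]
    simp only [S3, brm_neg1, brm_neg2, neg_neg]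
    exact LOD2 c b a
  -- the bilinear bracket as a linear map
  set Bl : A →ₗ[k] A →ₗ[k] A := D₂.br.compr₂ (LinearMap.mul' k A) with hBl
  have Bl_apply : ∀ a b : A, Bl a b = brm D₂.br a b := fun _ _ => rfl
  have gen_left : ∀ x y b : A, Bl (x * y - y * x) b = 0 := by
    intro x y b
    have e1 := E2 b (x ⊗ₜ[k] y)
    have e2 := E2 b (y ⊗ₜ[k] x)
    rw [LinearMap.mul'_apply, swapT_tmul] at e1 e2
    have hexp : Bl (x * y - y * x) b
        = LinearMap.mul' k A (D₂.br (x * y) b) - LinearMap.mul' k A (D₂.br (y * x) b) := by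
      simp [hBl, LinearMap.compr₂_apply, map_sub, LinearMap.sub_apply]
    rw [hexp, e1, e2]
    abel
  have gen_right : ∀ a x y : A,
      brm D₂.br a (x * y) - brm D₂.br a (y * x) ∈ commSpan k A := by
    intro a x y
    have e1 := E1 a (x ⊗ₜ[k] y)
    have e2 := E1 a (y ⊗ₜ[k] x)
    rw [LinearMap.mul'_apply, swapT_tmul] at e1 e2
    simp only [brm]
    rw [e1, e2]
    have k1 := comm_mem3 (k := k) (trL D₂.br a (x ⊗ₜ[k] y))
    have k2 := comm_mem3 (k := k) (trL D₂.br a (y ⊗ₜ[k] x))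
    have e : (mul3 k A (trL D₂.br a (x ⊗ₜ[k] y))
          + mul3 k A (tau123 k A (trL D₂.br a (y ⊗ₜ[k] x))))
        - (mul3 k A (trL D₂.br a (y ⊗ₜ[k] x))
          + mul3 k A (tau123 k A (trL D₂.br a (x ⊗ₜ[k] y))))
        = (mul3 k A (trL D₂.br a (x ⊗ₜ[k] y))
            - mul3 k A (tau123 k A (trL D₂.br a (x ⊗ₜ[k] y))))
          - (mul3 k A (trL D₂.br a (y ⊗ₜ[k] x))
            - mul3 k A (tau123 k A (trL D₂.br a (y ⊗ₜ[k] x)))) := by abel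
    rw [e]
    exact sub_mem k1 k2
  have hright : ∀ (c x : A), x ∈ commSpan k A → brm D₂.br c x ∈ commSpan k A := by
    intro c x hx
    induction hx using Submodule.span_induction with
    | mem x hmem =>
        obtain ⟨u, v, rfl⟩ := hmem
        have : brm D₂.br c (u * v - v * u)
            = brm D₂.br c (u * v) - brm D₂.br c (v * u) := by
          simp [brm, map_sub]
        rw [this]
        exact gen_right c u v
    | zero =>
        have : brm D₂.br c (0 : A) = 0 := by simp [brm]
        rw [this]; exact Submodule.zero_mem _
    | add u v hu hv hpu hpv =>
        have : brm D₂.br c (u + v) = brm D₂.br c u + brm D₂.br c v := by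
          simp [brm, map_add]
        rw [this]; exact Submodule.add_mem _ hpu hpv
    | smul r u hu hpu =>
        have : brm D₂.br c (r • u) = r • brm D₂.br c u := by
          simp [brm, map_smul]
        rw [this]; exact Submodule.smul_mem _ _ hpu
  set F : A →ₗ[k] A →ₗ[k] A ⧸ commSpan k A := Bl.compr₂ (commSpan k A).mkQ with hFdef
  have hF : ∀ a b : A, F a b = Submodule.Quotient.mk (brm D₂.br a b) := fun _ _ => rfl
  have hker : commSpan k A ≤ LinearMap.ker F := by
    intro x hx
    rw [LinearMap.mem_ker]
    induction hx using Submodule.span_induction with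
    | mem u hmem =>
        obtain ⟨p, q, rfl⟩ := hmem
        ext b
        show (commSpan k A).mkQ (Bl (p * q - q * p) b) = 0
        rw [gen_left p q b, map_zero]
    | zero => exact map_zero F
    | add u v hu hv hpu hpv => rw [map_add, hpu, hpv, add_zero]
    | smul r u hu hpu => rw [map_smul, hpu, smul_zero]
  set F' := (commSpan k A).liftQ F hker with hF'def
  have hF' : ∀ a : A, F' (Submodule.Quotient.mk a) = F a := fun a => rfl
  have hker2 : commSpan k A ≤ LinearMap.ker F'.flip := by
    intro x hx
    rw [LinearMap.mem_ker]
    apply LinearMap.ext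
    intro q
    obtain ⟨c, rfl⟩ := Submodule.Quotient.mk_surjective _ q
    show F' (Submodule.Quotient.mk c) x = 0
    rw [hF', hF, Submodule.Quotient.mk_eq_zero]
    exact hright c x hx
  set L := ((commSpan k A).liftQ F'.flip hker2).flip with hLdef
  have hL : ∀ a b : A, L (Submodule.Quotient.mk a) (Submodule.Quotient.mk b)
      = Submodule.Quotient.mk (brm D₂.br a b) := by
    intro a b
    show ((commSpan k A).liftQ F'.flip hker2) (Submodule.Quotient.mk b)
        (Submodule.Quotient.mk a) = _
    rw [Submodule.liftQ_apply]
    show F' (Submodule.Quotient.mk a) b = _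
    rw [hF', hF]
  have hmk12 : ∀ a b : A,
      (Submodule.Quotient.mk (brm D₂.br a b) : A ⧸ commSpan k A)
        = Submodule.Quotient.mk (brm D₁.br a b) := by
    intro a b
    rw [Submodule.Quotient.eq]
    have : brm D₂.br a b - brm D₁.br a b
        = LinearMap.mul' k A (D₂.br a b)
          - LinearMap.mul' k A (swapT k A (D₂.br a b)) := by
      simp only [brm, hbr]
    rw [this]
    exact comm_mem _
  refine ⟨LOD1, LOD2, S3, L, ?_, ?_, ?_, ?_⟩
  · intro a b
    rw [hL, hmk12]
  · intro a b
    exact hL a b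
  · intro x y
    obtain ⟨a, rfl⟩ := Submodule.Quotient.mk_surjective _ x
    obtain ⟨b, rfl⟩ := Submodule.Quotient.mk_surjective _ y
    rw [hL, hL, hmk12 a b, S3 a b, Submodule.Quotient.mk_neg]
  · intro x y z
    obtain ⟨a, rfl⟩ := Submodule.Quotient.mk_surjective _ x
    obtain ⟨b, rfl⟩ := Submodule.Quotient.mk_surjective _ y
    obtain ⟨c, rfl⟩ := Submodule.Quotient.mk_surjective _ z
    rw [hL b c, hL a b, hL a c, hL a, hL, hL, LOD2 a b c, Submodule.Quotient.mk_add]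

/-- Theorem `Thm-InOut`: if `⟪-,-⟫₁` (inner) and `⟪-,-⟫₂` (outer) are
swap-equivalent double brackets and one of them is Poisson, then `{-,-}_{1,m}` is a right
Loday bracket, `{-,-}_{2,m}` is a left Loday bracket, `{a,b}_{1,m} = -{b,a}_{2,m}`, and
they induce the same Lie bracket on `A/[A,A]`. -/
theorem inner_outer_loday_brackets
    {k A : Type*} [Field k] [CharZero k] [Ring A] [Algebra k A]
    (Sin : BimodStr k A)
    (hin : ∀ (a b : A) (d : A ⊗[k] A),
      Sin.act a d b = ((1 : A) ⊗ₜ[k] a) * d * (b ⊗ₜ[k] (1 : A)))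
    (Sout : BimodStr k A)
    (hout : ∀ (a b : A) (d : A ⊗[k] A),
      Sout.act a d b = (a ⊗ₜ[k] (1 : A)) * d * ((1 : A) ⊗ₜ[k] b))
    (D₁ : DoubleBracket Sin) (D₂ : DoubleBracket Sout)
    (hbr : ∀ a b : A, D₁.br a b = swapT k A (D₂.br a b))
    (hP : (∀ a b c : A, jac D₁.br a b c = 0) ∨ (∀ a b c : A, jac D₂.br a b c = 0)) :
    (∀ a b c : A, brm D₁.br (brm D₁.br a b) c
      = brm D₁.br a (brm D₁.br b c) + brm D₁.br (brm D₁.br a c) b) ∧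
    (∀ a b c : A, brm D₂.br a (brm D₂.br b c)
      = brm D₂.br (brm D₂.br a b) c + brm D₂.br b (brm D₂.br a c)) ∧
    (∀ a b : A, brm D₁.br a b = - brm D₂.br b a) ∧
    (∃ L : (A ⧸ commSpan k A) →ₗ[k] (A ⧸ commSpan k A) →ₗ[k] (A ⧸ commSpan k A),
      (∀ a b : A, L (Submodule.Quotient.mk a) (Submodule.Quotient.mk b)
        = Submodule.Quotient.mk (brm D₁.br a b)) ∧
      (∀ a b : A, L (Submodule.Quotient.mk a) (Submodule.Quotient.mk b)
        = Submodule.Quotient.mk (brm D₂.br a b)) ∧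
      (∀ x y, L x y = - L y x) ∧
      (∀ x y z, L x (L y z) = L (L x y) z + L y (L x z))) :=
  inner_outer_loday_brackets_aux Sin hin Sout hout D₁ D₂ hbr hP
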